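/- arXiv:0903.3753 — 2 statements merged into one kernel-verified Lean document; each statement's English description precedes it below -/
import Mathlib

section
/- Let n be a prime with n ≥ 3 and let k be an integer with 1 ≤ k ≤ n−2. Then sk(ℓ_k) = Σ_w (k − 2 + sk(w)) / (ρ_k(w) + 1), where the sum is over all binary words w of length n−k−2 that contain no subword 0^{k+1}, and ρ_k(w) denotes the number of occurrences of 0^k as a subword of w. -/
/-- All binary words of length `n` (`false` = 0, `true` = 1), listed in lexicographic order. -/
def allWords : ℕ → List (List Bool)
  | 0 => [[]]
  | n + 1 => (allWords n).flatMap (fun w => [w ++ [false], w ++ [true]])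

/-- The skew of a binary word: number of 0s minus number of 1s. -/
def skew (w : List Bool) : ℤ := (w.map (fun b => if b then (-1 : ℤ) else 1)).sum

/-- The discrepancy of a binary word: the maximum over all (nonempty) initial
segments of the absolute difference between the number of 0s and of 1s. -/
def disc (w : List Bool) : ℤ :=
  ((List.range w.length).map (fun M => |skew (w.take (M + 1))|)).foldr max 0

/-- `w` contains a run of `k` consecutive 0s. -/
def hasZeroRun (k : ℕ) (w : List Bool) : Prop := List.replicate k false <:+: w

instance (k : ℕ) : DecidablePred (hasZeroRun k) := fun _ => inferInstanceAs (Decidable (_ <:+: _))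

/-- Number of binary words of length `n` containing no run of `k` consecutive 0s. -/
def alpha (k n : ℕ) : ℕ := ((allWords n).filter (fun w => !decide (hasZeroRun k w))).length

/-- Sum of the skews of all binary words of length `n` containing no run of `k` consecutive 0s. -/
def beta (k n : ℕ) : ℤ :=
  (((allWords n).filter (fun w => !decide (hasZeroRun k w))).map skew).sum

/-- Strict lexicographic order on binary words, with 0 < 1. -/
def lexLt (u v : List Bool) : Prop := List.Lex (· < ·) u v

instance : DecidableRel lexLt := fun _ _ => inferInstanceAs (Decidable (List.Lex _ _ _))

/-- Weak lexicographic order on binary words. -/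
def lexLe (u v : List Bool) : Prop := lexLt u v ∨ u = v

instance : DecidableRel lexLe := fun _ _ => inferInstanceAs (Decidable (_ ∨ _))

/-- A binary Lyndon word: nonempty and strictly lexicographically smaller than
each of its nontrivial cyclic rotations. -/
def IsLyndon (w : List Bool) : Prop :=
  w ≠ [] ∧ ∀ i ∈ Finset.Ico 1 w.length, lexLt w (w.rotate i)

instance : DecidablePred IsLyndon := fun _ => inferInstanceAs (Decidable (_ ∧ _))

/-- `ell n k`: the concatenation, in lexicographic order, of all binary Lyndon words of
length `n` whose longest run of consecutive 0s has length exactly `k`. -/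
def ell (n k : ℕ) : List Bool :=
  (List.insertionSort lexLe ((allWords n).filter (fun w =>
    decide (IsLyndon w) && decide (hasZeroRun k w) && !decide (hasZeroRun (k + 1) w)))).flatten

/-- `LWord n`: the lexicographically least binary de Bruijn sequence of order `n`, i.e. the
concatenation, in lexicographic order, of all binary Lyndon words of length dividing `n`. -/
def LWord (n : ℕ) : List Bool :=
  (List.insertionSort lexLe (((List.range (n + 1)).flatMap allWords).filter
    (fun w => decide (IsLyndon w) && decide (w.length ∣ n)))).flatten

/-- The number of occurrences of `0^k` as a subword of `w`. -/
def occCount (k : ℕ) (w : List Bool) : ℕ :=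
  ((List.range (w.length + 1)).filter
    (fun i => decide (List.replicate k false <+: w.drop i))).length

/-!
Cutting a word `L` counted by `ℓ_k` just before one of its `c(L)` cyclic occurrences of `0^k`
gives the rotation `0^k 1 w 1`, where `w` has length `n - k - 2` and no factor `0^{k+1}`.
Conversely, since `n` is prime, the `n` rotations of `0^k 1 w 1` are distinct and exactly one of
them is a Lyndon word, which is then counted by `ℓ_k`. So the words `w` sent to `L` correspond to
the cyclic occurrences of `0^k` in `L`, and each of them has `k - 2 + sk(w) = sk(L)` and
`ρ_k(w) + 1 = c(L)`: the fibre over `L` contributes exactly `sk(L)` to the sum.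
-/

open List

theorem mem_allWords {m : ℕ} {w : List Bool} : w ∈ allWords m ↔ w.length = m := by
  induction m generalizing w with
  | zero => simp [allWords]
  | succ m ih =>
    rcases w.eq_nil_or_concat with rfl | ⟨u, b, rfl⟩
    · simp [allWords]
    · cases b <;> simp [allWords, ih]

theorem nodup_allWords (m : ℕ) : (allWords m).Nodup := by
  induction m with
  | zero => simp [allWords]
  | succ m ih =>
    refine nodup_flatMap.2 ⟨fun u _ => by simp, ih.imp fun hne => ?_⟩
    simp [Function.onFun, hne.symm]

theorem skew_append (u v : List Bool) : skew (u ++ v) = skew u + skew v := by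
  simp [skew]

theorem skew_flatten (ws : List (List Bool)) : skew ws.flatten = (ws.map skew).sum := by
  induction ws with
  | nil => simp [skew]
  | cons w ws ih => simp [skew_append, ih]

theorem List.IsRotated.skew_eq {u v : List Bool} (h : u ~r v) : skew u = skew v :=
  (h.perm.map _).sum_eq

theorem replicate_false_prefix_append_true_cons {j : ℕ} {u v : List Bool} :
    replicate j false <+: u ++ true :: v ↔ replicate j false <+: u := by
  induction u generalizing j with
  | nil => cases j <;> simp [replicate_succ]
  | cons a u ih => cases j <;> simp [replicate_succ, ih]

theorem hasZeroRun_iff_exists_prefix_drop {j : ℕ} {w : List Bool} :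
    hasZeroRun j w ↔ ∃ t, replicate j false <+: w.drop t := by
  constructor
  · rintro ⟨s, t, rfl⟩
    exact ⟨s.length, by simp⟩
  · rintro ⟨t, h⟩
    exact h.isInfix.trans (drop_suffix t w).isInfix

theorem hasZeroRun_append_true_iff {j : ℕ} {u : List Bool} :
    hasZeroRun j (u ++ [true]) ↔ hasZeroRun j u := by
  refine ⟨fun h => ?_, fun h => h.trans (prefix_append u [true]).isInfix⟩
  obtain ⟨t, h⟩ := hasZeroRun_iff_exists_prefix_drop.1 h
  by_cases ht : t ≤ u.length
  · rw [drop_append_of_le_length ht, replicate_false_prefix_append_true_cons] at h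
    exact hasZeroRun_iff_exists_prefix_drop.2 ⟨t, h⟩
  · rw [drop_of_length_le (by simp; omega), prefix_nil] at h
    simp [hasZeroRun, h]

theorem replicate_false_prefix_drop_replicate_append_true_cons {j k i : ℕ} {w : List Bool} :
    replicate j false <+: (replicate k false ++ true :: w).drop i ↔
      (i ≤ k ∧ j ≤ k - i) ∨ ∃ t, i = k + 1 + t ∧ replicate j false <+: w.drop t := by
  by_cases hi : i ≤ k
  · rw [drop_append_of_le_length (by simpa using hi), drop_replicate,
      replicate_false_prefix_append_true_cons, prefix_replicate_iff]
    simp [hi]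
    omega
  · obtain ⟨t, rfl⟩ : ∃ t, i = k + 1 + t := ⟨i - (k + 1), by omega⟩
    have : replicate k false ++ true :: w = (replicate k false ++ [true]) ++ w := by simp
    rw [this, drop_append, drop_of_length_le (by simp)]
    simp [hi]

def cyclicZeroRuns (j : ℕ) (y : List Bool) : Finset ℕ :=
  (Finset.range y.length).filter fun i => replicate j false <+: y.rotate i

theorem mem_cyclicZeroRuns {j i : ℕ} {y : List Bool} :
    i ∈ cyclicZeroRuns j y ↔ i < y.length ∧ replicate j false <+: y.rotate i := by
  rw [cyclicZeroRuns, Finset.mem_filter, Finset.mem_range]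

theorem card_cyclicZeroRuns_rotate_le (j r : ℕ) (y : List Bool) :
    (cyclicZeroRuns j (y.rotate r)).card ≤ (cyclicZeroRuns j y).card := by
  refine Finset.card_le_card_of_injOn (fun i => (r + i) % y.length) (fun i hi => ?_)
    (fun i hi i' hi' h => ?_)
  · rw [Finset.mem_coe, mem_cyclicZeroRuns, length_rotate, rotate_rotate] at hi
    rw [Finset.mem_coe, mem_cyclicZeroRuns, rotate_mod]
    exact ⟨Nat.mod_lt _ (by omega), hi.2⟩
  · rw [Finset.mem_coe, mem_cyclicZeroRuns, length_rotate] at hi hi'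
    have := Nat.ModEq.add_left_cancel' r h
    rwa [Nat.ModEq, Nat.mod_eq_of_lt hi.1, Nat.mod_eq_of_lt hi'.1] at this

theorem List.IsRotated.card_cyclicZeroRuns_eq {j : ℕ} {y y' : List Bool} (h : y ~r y') :
    (cyclicZeroRuns j y).card = (cyclicZeroRuns j y').card := by
  obtain ⟨r, rfl⟩ := h
  obtain ⟨s, hs⟩ := IsRotated.forall y r
  refine le_antisymm ?_ (card_cyclicZeroRuns_rotate_le j r y)
  conv_lhs => rw [← hs]
  exact card_cyclicZeroRuns_rotate_le j s _

theorem mem_cyclicZeroRuns_append_true {j i : ℕ} {u : List Bool} :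
    i ∈ cyclicZeroRuns j (u ++ [true]) ↔ i ≤ u.length ∧ replicate j false <+: u.drop i := by
  simp only [cyclicZeroRuns, Finset.mem_filter, Finset.mem_range, length_append,
    length_singleton, Nat.lt_succ_iff, and_congr_right_iff]
  intro hi
  rw [rotate_eq_drop_append_take (by simp; omega), drop_append_of_le_length hi, append_assoc,
    singleton_append, replicate_false_prefix_append_true_cons]

theorem cyclicZeroRuns_append_true_nonempty_iff {j : ℕ} {u : List Bool} :
    (cyclicZeroRuns j (u ++ [true])).Nonempty ↔ hasZeroRun j u := by
  simp only [Finset.Nonempty, mem_cyclicZeroRuns_append_true, hasZeroRun_iff_exists_prefix_drop]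
  refine ⟨fun ⟨i, _, h⟩ => ⟨i, h⟩, fun ⟨t, h⟩ => ?_⟩
  by_cases ht : t ≤ u.length
  · exact ⟨t, ht, h⟩
  · rw [drop_of_length_le (by omega), prefix_nil] at h
    exact ⟨0, by omega, by simp [h]⟩

def cutWord (k : ℕ) (w : List Bool) : List Bool := (replicate k false ++ true :: w) ++ [true]

def innerWord (k : ℕ) (y : List Bool) : List Bool := (y.drop (k + 1)).dropLast

theorem length_cutWord (k : ℕ) (w : List Bool) : (cutWord k w).length = k + w.length + 2 := by
  simp [cutWord]
  omega

theorem skew_cutWord (k : ℕ) (w : List Bool) : skew (cutWord k w) = k - 2 + skew w := by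
  simp [cutWord, skew]
  ring

theorem innerWord_cutWord (k : ℕ) (w : List Bool) : innerWord k (cutWord k w) = w := by
  simp [innerWord, cutWord, drop_append]

theorem hasZeroRun_succ_replicate_append_true_cons {k : ℕ} {w : List Bool} :
    hasZeroRun (k + 1) (replicate k false ++ true :: w) ↔ hasZeroRun (k + 1) w := by
  simp only [hasZeroRun_iff_exists_prefix_drop,
    replicate_false_prefix_drop_replicate_append_true_cons]
  constructor
  · rintro ⟨i, ⟨_, h⟩ | ⟨t, -, h⟩⟩
    · omega
    · exact ⟨t, h⟩
  · rintro ⟨t, h⟩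
    exact ⟨k + 1 + t, Or.inr ⟨t, rfl, h⟩⟩

theorem cyclicZeroRuns_succ_cutWord_eq_empty_iff {k : ℕ} {w : List Bool} :
    cyclicZeroRuns (k + 1) (cutWord k w) = ∅ ↔ ¬hasZeroRun (k + 1) w := by
  rw [← Finset.not_nonempty_iff_eq_empty, cutWord, cyclicZeroRuns_append_true_nonempty_iff,
    hasZeroRun_succ_replicate_append_true_cons]

theorem card_cyclicZeroRuns_cutWord (k : ℕ) (w : List Bool) :
    (cyclicZeroRuns k (cutWord k w)).card = occCount k w + 1 := by
  have hruns : cyclicZeroRuns k (cutWord k w) = insert 0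
      (((Finset.range (w.length + 1)).filter fun t => replicate k false <+: w.drop t).map
        (addRightEmbedding (k + 1))) := by
    ext i
    simp only [cutWord, mem_cyclicZeroRuns_append_true,
      replicate_false_prefix_drop_replicate_append_true_cons, Finset.mem_insert, Finset.mem_map,
      Finset.mem_filter, Finset.mem_range, addRightEmbedding_apply, length_append,
      length_replicate, length_cons]
    constructor
    · rintro ⟨hi, ⟨_, _⟩ | ⟨t, rfl, h⟩⟩
      · omega
      · exact Or.inr ⟨t, ⟨by omega, h⟩, by omega⟩
    · rintro (rfl | ⟨t, ⟨ht, h⟩, rfl⟩)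
      · simp
      · exact ⟨by omega, Or.inr ⟨t, by omega, h⟩⟩
  rw [hruns, Finset.card_insert_of_notMem (by simp), Finset.card_map]
  rfl

theorem exists_eq_cutWord {k : ℕ} {y : List Bool} (hy : k + 2 ≤ y.length)
    (hrun : replicate k false <+: y) (hno : cyclicZeroRuns (k + 1) y = ∅) :
    ∃ w, y = cutWord k w ∧ ¬hasZeroRun (k + 1) w := by
  obtain ⟨_ | ⟨b, z⟩, rfl⟩ := hrun
  · simp at hy
  rcases z.eq_nil_or_concat with rfl | ⟨v, c, rfl⟩
  · simp at hy
  rw [concat_eq_append] at hno ⊢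
  have hmem : ∀ i < (replicate k false ++ b :: (v ++ [c])).length,
      replicate (k + 1) false <+: (replicate k false ++ b :: (v ++ [c])).rotate i → False :=
    fun i hi h => Finset.notMem_empty i (hno ▸ mem_cyclicZeroRuns.2 ⟨hi, h⟩)
  have hb : b = true := by
    by_contra hb
    refine hmem 0 (by simp) ?_
    simp [Bool.eq_false_iff.2 hb, replicate_succ']
  have hc : c = true := by
    by_contra hc
    refine hmem (replicate k false ++ b :: v).length (by simp) ?_
    rw [show replicate k false ++ b :: (v ++ [c]) = (replicate k false ++ b :: v) ++ [c] by simp,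
      rotate_append_length_eq]
    simp [Bool.eq_false_iff.2 hc, replicate_succ]
  subst hb hc
  have hcut : replicate k false ++ true :: (v ++ [true]) = cutWord k v := by simp [cutWord]
  rw [hcut] at hno ⊢
  exact ⟨v, rfl, cyclicZeroRuns_succ_cutWord_eq_empty_iff.1 hno⟩

theorem IsLyndon.le_of_isRotated {L M : List Bool} (hL : IsLyndon L) (hr : L ~r M) : L ≤ M := by
  obtain ⟨i, rfl⟩ := hr
  have hpos : 0 < L.length := length_pos_iff.2 hL.1
  rw [← rotate_mod]
  by_cases h0 : i % L.length = 0
  · rw [h0, rotate_zero]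
  · exact le_of_lt (hL.2 _ (Finset.mem_Ico.2 ⟨Nat.pos_of_ne_zero h0, Nat.mod_lt _ hpos⟩))

theorem IsLyndon.eq_of_isRotated {L M : List Bool} (hL : IsLyndon L) (hM : IsLyndon M)
    (hr : L ~r M) : L = M :=
  le_antisymm (hL.le_of_isRotated hr) (hM.le_of_isRotated hr.symm)

theorem exists_eq_replicate_false_append_true_cons {u : List Bool} (h : true ∈ u) :
    ∃ a v, u = replicate a false ++ true :: v := by
  induction u with
  | nil => cases h
  | cons b u ih =>
    cases b
    · obtain ⟨a, v, rfl⟩ := ih (by simpa using h)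
      exact ⟨a + 1, v, rfl⟩
    · exact ⟨0, u, rfl⟩

/-- Otherwise rotating its final `0` to the front lengthens the leading run of `0`s and gives a
smaller word. -/
theorem IsLyndon.exists_eq_append_true {L : List Bool} (hL : IsLyndon L) (ht : true ∈ L) :
    ∃ u, L = u ++ [true] := by
  obtain ⟨u, b, rfl⟩ := (eq_nil_or_concat L).resolve_left hL.1
  rw [concat_eq_append] at *
  cases b
  · obtain ⟨a, v, rfl⟩ := exists_eq_replicate_false_append_true_cons (by simpa using ht)
    have hlt : _ < (replicate a false ++ true :: v ++ [false]).rotate _ :=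
      hL.2 (replicate a false ++ true :: v).length (Finset.mem_Ico.2 ⟨by simp; omega, by simp⟩)
    rw [rotate_append_length_eq] at hlt
    refine absurd hlt (lt_asymm ?_)
    have : [false] ++ (replicate a false ++ true :: v) =
        replicate a false ++ false :: true :: v := by
      rw [singleton_append, ← cons_append, ← replicate_succ, replicate_succ', append_assoc,
        singleton_append]
    rw [this, append_assoc]
    exact append_left_lt (Lex.rel (by decide))
  · exact ⟨u, rfl⟩

theorem length_dvd_of_rotate_eq_self {y : List Bool} (hp : y.length.Prime) (ht : true ∈ y)
    (hf : false ∈ y) {d : ℕ} (h : y.rotate d = y) : y.length ∣ d := by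
  by_contra hd
  obtain ⟨m, -, hm⟩ :=
    Nat.exists_mul_mod_eq_one_of_coprime (hp.coprime_iff_not_dvd.2 hd).symm hp.one_lt
  have hmul : ∀ j, y.rotate (d * j) = y := by
    intro j
    induction j with
    | zero => simp
    | succ j ih => rw [Nat.mul_succ, ← rotate_rotate, ih, h]
  obtain ⟨a, ha⟩ := rotate_one_eq_self_iff_eq_replicate.1 (by rw [← hm, rotate_mod, hmul])
  rw [ha, mem_replicate] at ht hf
  exact absurd (ht.2.trans hf.2.symm) (by decide)

theorem rotate_injOn_of_prime_length {y : List Bool} (hp : y.length.Prime) (ht : true ∈ y)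
    (hf : false ∈ y) : Set.InjOn y.rotate (Set.Iio y.length) := by
  intro i hi j hj h
  wlog hij : i ≤ j generalizing i j
  · exact (this hj hi h.symm (by omega)).symm
  have hper : (y.rotate i).rotate (j - i) = y.rotate i := by
    rw [rotate_rotate, Nat.add_sub_cancel' hij, h]
  have hdvd := length_dvd_of_rotate_eq_self (by rwa [length_rotate]) (mem_rotate.2 ht)
    (mem_rotate.2 hf) hper
  rw [length_rotate] at hdvd
  have := Nat.eq_zero_of_dvd_of_lt hdvd (by simp at hj; omega)
  omega

theorem exists_isLyndon_isRotated {y : List Bool} (hp : y.length.Prime) (ht : true ∈ y)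
    (hf : false ∈ y) : ∃ L, IsLyndon L ∧ y ~r L := by
  obtain ⟨i, -, hmin⟩ :=
    (Finset.range y.length).exists_min_image y.rotate ⟨0, Finset.mem_range.2 hp.pos⟩
  refine ⟨y.rotate i, ⟨fun h => by simp [rotate_eq_nil_iff.1 h] at ht, fun j hj => ?_⟩,
    (IsRotated.forall y i).symm⟩
  rw [Finset.mem_Ico, length_rotate] at hj
  have hrot : (y.rotate i).rotate j = y.rotate ((i + j) % y.length) := by
    rw [rotate_mod, rotate_rotate]
  refine lt_of_le_of_ne (hrot ▸ hmin _ (Finset.mem_range.2 (Nat.mod_lt _ hp.pos))) fun h => ?_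
  have := rotate_injOn_of_prime_length (y := y.rotate i) (by rwa [length_rotate])
    (mem_rotate.2 ht) (mem_rotate.2 hf) (show 0 < _ by simpa using hp.pos)
    (show j < _ by simpa using hj.2)
    (by rwa [rotate_zero])
  omega

/-- Arbitrary when `y` has no Lyndon rotation. -/
noncomputable def lyndonRotation (y : List Bool) : List Bool :=
  Classical.epsilon fun L => IsLyndon L ∧ y ~r L

theorem isLyndon_lyndonRotation {y : List Bool} (hp : y.length.Prime) (ht : true ∈ y)
    (hf : false ∈ y) : IsLyndon (lyndonRotation y) ∧ y ~r lyndonRotation y :=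
  Classical.epsilon_spec (exists_isLyndon_isRotated hp ht hf)

theorem lyndonRotation_eq {y L : List Bool} (hL : IsLyndon L) (hr : y ~r L) :
    lyndonRotation y = L :=
  have h : IsLyndon (lyndonRotation y) ∧ y ~r lyndonRotation y :=
    Classical.epsilon_spec (p := fun L => IsLyndon L ∧ y ~r L) ⟨L, hL, hr⟩
  h.1.eq_of_isRotated hL (h.2.symm.trans hr)

def IsLyndonWithMaxZeroRun (n k : ℕ) (L : List Bool) : Prop :=
  L.length = n ∧ IsLyndon L ∧ hasZeroRun k L ∧ ¬hasZeroRun (k + 1) L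

def lyndonWordsWithMaxZeroRun (n k : ℕ) : List (List Bool) :=
  (allWords n).filter fun w =>
    decide (IsLyndon w) && decide (hasZeroRun k w) && !decide (hasZeroRun (k + 1) w)

def wordsWithoutZeroRun (m j : ℕ) : List (List Bool) :=
  (allWords m).filter fun w => !decide (hasZeroRun j w)

theorem mem_lyndonWordsWithMaxZeroRun {n k : ℕ} {L : List Bool} :
    L ∈ lyndonWordsWithMaxZeroRun n k ↔ IsLyndonWithMaxZeroRun n k L := by
  simp [lyndonWordsWithMaxZeroRun, IsLyndonWithMaxZeroRun, mem_allWords, and_assoc]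

theorem mem_wordsWithoutZeroRun {m j : ℕ} {w : List Bool} :
    w ∈ wordsWithoutZeroRun m j ↔ w.length = m ∧ ¬hasZeroRun j w := by
  simp [wordsWithoutZeroRun, mem_allWords]

theorem nodup_lyndonWordsWithMaxZeroRun (n k : ℕ) : (lyndonWordsWithMaxZeroRun n k).Nodup :=
  (nodup_allWords n).filter _

theorem nodup_wordsWithoutZeroRun (m j : ℕ) : (wordsWithoutZeroRun m j).Nodup :=
  (nodup_allWords m).filter _

theorem skew_ell (n k : ℕ) :
    (skew (ell n k) : ℚ) =
      ∑ L ∈ (lyndonWordsWithMaxZeroRun n k).toFinset, (skew L : ℚ) := by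
  rw [List.sum_toFinset _ (nodup_lyndonWordsWithMaxZeroRun n k), ell, skew_flatten,
    ((perm_insertionSort _ _).map _).sum_eq, Int.cast_list_sum, map_map]
  rfl

theorem isLyndonWithMaxZeroRun_of_isRotated_cutWord {k : ℕ} {w L : List Bool} (hL : IsLyndon L)
    (hr : cutWord k w ~r L) (hw : ¬hasZeroRun (k + 1) w) :
    IsLyndonWithMaxZeroRun (k + w.length + 2) k L := by
  obtain ⟨u, rfl⟩ := hL.exists_eq_append_true (hr.mem_iff.1 (by simp [cutWord]))
  refine ⟨by rw [← hr.perm.length_eq, length_cutWord], hL, ?_, ?_⟩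
  · rw [hasZeroRun_append_true_iff, ← cyclicZeroRuns_append_true_nonempty_iff,
      ← Finset.card_pos, ← hr.card_cyclicZeroRuns_eq, card_cyclicZeroRuns_cutWord]
    omega
  · rw [hasZeroRun_append_true_iff, ← cyclicZeroRuns_append_true_nonempty_iff,
      Finset.not_nonempty_iff_eq_empty, ← Finset.card_eq_zero, ← hr.card_cyclicZeroRuns_eq,
      Finset.card_eq_zero, cyclicZeroRuns_succ_cutWord_eq_empty_iff]
    exact hw

namespace IsLyndonWithMaxZeroRun

variable {n k : ℕ} {L : List Bool}

theorem exists_eq_append_true (hL : IsLyndonWithMaxZeroRun n k L) (hkn : k + 1 ≤ n) :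
    ∃ u, L = u ++ [true] := by
  refine hL.2.1.exists_eq_append_true (by_contra fun ht => hL.2.2.2 ?_)
  have : L = replicate n false := eq_replicate_iff.2 ⟨hL.1, fun b hb => by
    cases b
    · rfl
    · exact absurd hb ht⟩
  rw [this]
  exact (prefix_replicate_iff.2 ⟨by simpa using hkn, by simp⟩).isInfix

theorem cyclicZeroRuns_nonempty (hL : IsLyndonWithMaxZeroRun n k L) (hkn : k + 1 ≤ n) :
    (cyclicZeroRuns k L).Nonempty := by
  obtain ⟨u, rfl⟩ := hL.exists_eq_append_true hkn
  exact cyclicZeroRuns_append_true_nonempty_iff.2 (hasZeroRun_append_true_iff.1 hL.2.2.1)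

theorem cyclicZeroRuns_succ_eq_empty (hL : IsLyndonWithMaxZeroRun n k L) (hkn : k + 1 ≤ n) :
    cyclicZeroRuns (k + 1) L = ∅ := by
  obtain ⟨u, rfl⟩ := hL.exists_eq_append_true hkn
  rw [← Finset.not_nonempty_iff_eq_empty, cyclicZeroRuns_append_true_nonempty_iff,
    ← hasZeroRun_append_true_iff]
  exact hL.2.2.2

theorem rotate_eq_cutWord (hL : IsLyndonWithMaxZeroRun n k L) (hkn : k + 2 ≤ n) {i : ℕ}
    (hi : i ∈ cyclicZeroRuns k L) :
    ∃ w, L.rotate i = cutWord k w ∧ ¬hasZeroRun (k + 1) w := by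
  refine exists_eq_cutWord (by rw [length_rotate, hL.1]; exact hkn) (mem_cyclicZeroRuns.1 hi).2 ?_
  rw [← Finset.card_eq_zero, (IsRotated.forall L i).card_cyclicZeroRuns_eq,
    hL.cyclicZeroRuns_succ_eq_empty (by omega), Finset.card_empty]

theorem rotate_injOn (hL : IsLyndonWithMaxZeroRun n k L) (hn : n.Prime) (hk : 1 ≤ k)
    (hkn : k + 1 ≤ n) : Set.InjOn L.rotate (Set.Iio n) := by
  obtain ⟨u, hu⟩ := hL.exists_eq_append_true hkn
  have hf : false ∈ L := hL.2.2.1.subset (mem_replicate.2 ⟨by omega, rfl⟩)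
  simpa only [hL.1] using rotate_injOn_of_prime_length (hL.1 ▸ hn) (by simp [hu]) hf

end IsLyndonWithMaxZeroRun

section Correspondence

variable {n k : ℕ}

theorem isLyndonWithMaxZeroRun_lyndonRotation_cutWord {w : List Bool} (hn : n.Prime)
    (hk : 1 ≤ k) (hkn : k + 2 ≤ n) (hw : w ∈ wordsWithoutZeroRun (n - k - 2) (k + 1)) :
    IsLyndonWithMaxZeroRun n k (lyndonRotation (cutWord k w)) ∧
      cutWord k w ~r lyndonRotation (cutWord k w) := by
  obtain ⟨hlen, hno⟩ := mem_wordsWithoutZeroRun.1 hw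
  replace hlen : k + w.length + 2 = n := by omega
  obtain ⟨hL, hr⟩ := isLyndon_lyndonRotation (by rwa [length_cutWord, hlen])
    (by simp [cutWord]) (by simp [cutWord]; omega)
  exact ⟨hlen ▸ isLyndonWithMaxZeroRun_of_isRotated_cutWord hL hr hno, hr⟩

theorem card_filter_lyndonRotation_cutWord_eq {L : List Bool} (hn : n.Prime) (hk : 1 ≤ k)
    (hkn : k + 2 ≤ n) (hL : IsLyndonWithMaxZeroRun n k L) :
    ((wordsWithoutZeroRun (n - k - 2) (k + 1)).toFinset.filter
      fun w => lyndonRotation (cutWord k w) = L).card = (cyclicZeroRuns k L).card := by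
  have hinner : ∀ i ∈ cyclicZeroRuns k L, L.rotate i = cutWord k (innerWord k (L.rotate i)) ∧
      ¬hasZeroRun (k + 1) (innerWord k (L.rotate i)) := by
    intro i hi
    obtain ⟨w, hw, hno⟩ := hL.rotate_eq_cutWord hkn hi
    rw [hw, innerWord_cutWord]
    exact ⟨rfl, hno⟩
  have hlt : ∀ i ∈ cyclicZeroRuns k L, i < n := fun i hi => hL.1 ▸ (mem_cyclicZeroRuns.1 hi).1
  symm
  refine Finset.card_nbij (fun i => innerWord k (L.rotate i)) (fun i hi => ?_)
    (fun i hi j hj h => ?_) (fun w hw => ?_)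
  · dsimp only
    obtain ⟨hrot, hno⟩ := hinner i hi
    have hlen := congrArg length hrot
    rw [length_rotate, hL.1, length_cutWord] at hlen
    rw [Finset.mem_coe, Finset.mem_filter, mem_toFinset, mem_wordsWithoutZeroRun]
    exact ⟨⟨by omega, hno⟩, lyndonRotation_eq hL.2.1 (hrot ▸ IsRotated.forall L i)⟩
  · refine hL.rotate_injOn hn hk (by omega) (hlt i hi) (hlt j hj) ?_
    rw [(hinner i hi).1, (hinner j hj).1]
    exact congrArg (cutWord k) h
  · obtain ⟨hmem, rfl⟩ := Finset.mem_filter.1 (Finset.mem_coe.1 hw)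
    obtain ⟨r, hr⟩ := (isLyndonWithMaxZeroRun_lyndonRotation_cutWord hn hk hkn
      (mem_toFinset.1 hmem)).2.symm
    have hpos : 0 < (lyndonRotation (cutWord k w)).length := hL.1 ▸ hn.pos
    refine ⟨r % (lyndonRotation (cutWord k w)).length, mem_cyclicZeroRuns.2
      ⟨Nat.mod_lt _ hpos, ?_⟩, ?_⟩
    · rw [rotate_mod, hr]
      exact (prefix_append _ _).trans (prefix_append _ _)
    · simp only [rotate_mod, hr, innerWord_cutWord]

theorem sum_filter_lyndonRotation_cutWord_eq {L : List Bool} (hn : n.Prime) (hk : 1 ≤ k)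
    (hkn : k + 2 ≤ n) (hL : IsLyndonWithMaxZeroRun n k L) :
    ∑ w ∈ (wordsWithoutZeroRun (n - k - 2) (k + 1)).toFinset
        with lyndonRotation (cutWord k w) = L,
      ((k : ℚ) - 2 + skew w) / (occCount k w + 1) = skew L := by
  have hterm : ∀ w ∈ (wordsWithoutZeroRun (n - k - 2) (k + 1)).toFinset.filter
      (fun w => lyndonRotation (cutWord k w) = L),
      ((k : ℚ) - 2 + skew w) / (occCount k w + 1) = skew L / (cyclicZeroRuns k L).card := by
    intro w hw
    obtain ⟨hmem, rfl⟩ := Finset.mem_filter.1 hw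
    have hr := (isLyndonWithMaxZeroRun_lyndonRotation_cutWord hn hk hkn
      (mem_toFinset.1 hmem)).2
    rw [← hr.skew_eq, ← hr.card_cyclicZeroRuns_eq, skew_cutWord, card_cyclicZeroRuns_cutWord]
    push_cast
    ring
  rw [Finset.sum_congr rfl hterm, Finset.sum_const,
    card_filter_lyndonRotation_cutWord_eq hn hk hkn hL, nsmul_eq_mul, mul_div_cancel₀]
  exact Nat.cast_ne_zero.2 (hL.cyclicZeroRuns_nonempty (by omega)).card_pos.ne'

end Correspondence

theorem skew_ell_eq_general (n k : ℕ) (hn : n.Prime) (hk : 1 ≤ k) (hkn : k + 2 ≤ n) :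
    (skew (ell n k) : ℚ) =
      (((allWords (n - k - 2)).filter (fun w => !decide (hasZeroRun (k + 1) w))).map
        (fun w => ((k : ℚ) - 2 + (skew w : ℚ)) / ((occCount k w : ℚ) + 1))).sum := by
  have hmaps : ∀ w ∈ (wordsWithoutZeroRun (n - k - 2) (k + 1)).toFinset,
      lyndonRotation (cutWord k w) ∈ (lyndonWordsWithMaxZeroRun n k).toFinset := fun w hw =>
    mem_toFinset.2 (mem_lyndonWordsWithMaxZeroRun.2
      (isLyndonWithMaxZeroRun_lyndonRotation_cutWord hn hk hkn (mem_toFinset.1 hw)).1)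
  change _ = ((wordsWithoutZeroRun (n - k - 2) (k + 1)).map _).sum
  rw [skew_ell, ← List.sum_toFinset _ (nodup_wordsWithoutZeroRun _ _),
    ← Finset.sum_fiberwise_of_maps_to hmaps]
  exact Finset.sum_congr rfl fun L hL => (sum_filter_lyndonRotation_cutWord_eq hn hk hkn
    (mem_lyndonWordsWithMaxZeroRun.1 (mem_toFinset.1 hL))).symm

/-- For `n` prime, `n ≥ 3`, and `1 ≤ k ≤ n − 2`,
`sk(ℓ_k) = Σ_w (k − 2 + sk(w)) / (ρ_k(w) + 1)`, the sum over binary words `w` of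
length `n − k − 2` containing no subword `0^{k+1}`, where `ρ_k(w)` is the number of
occurrences of `0^k` in `w`. -/
theorem skew_ell_eq (n k : ℕ) (hn : n.Prime) (hn3 : 3 ≤ n) (hk : 1 ≤ k) (hkn : k + 2 ≤ n) :
    (skew (ell n k) : ℚ) =
      (((allWords (n - k - 2)).filter (fun w => !decide (hasZeroRun (k + 1) w))).map
        (fun w => ((k : ℚ) - 2 + (skew w : ℚ)) / ((occCount k w : ℚ) + 1))).sum :=
  skew_ell_eq_general n k hn hk hkn
end

section
/- For integers k and n with 2 ≤ k ≤ n−1, α_k(n) ≤ 2^n · e^{−(n−k+1)/(12 · 2^k)}. -/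
/-!
Extending a word of length `n` avoiding `0^k` by `1` always gives an avoiding word, and extending
it by `0` does so unless it ends in `0^(k-1)`. Appending `10^(k-1)` to any avoiding word of length
`n - k` produces a word of the latter kind, so `α(n+1) ≤ 2α(n) - α(n-k) ≤ (2 - 2^(-k)) α(n)`, the
last step because `α(n) ≤ 2^k α(n-k)`. Iterating from `n = k` and using `1 - x ≤ e^(-x)` gives
`α(k+j) ≤ 2^(k+j) e^(-j/2^(k+1))`, which is stronger than the claim for `j ≥ 1`.
-/

namespace List

variable {α : Type*}

theorem eq_nil_of_prefix_cons_of_notMem {l t : List α} {b : α} (h : l <+: b :: t) (hb : b ∉ l) :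
    l = [] := by
  rcases prefix_cons_iff.mp h with rfl | ⟨t, rfl, -⟩
  · rfl
  · exact absurd mem_cons_self hb

theorem infix_append_cons_iff_of_notMem {l xs ys : List α} {b : α} (hb : b ∉ l) :
    l <:+: xs ++ b :: ys ↔ l <:+: xs ∨ l <:+: ys := by
  refine ⟨fun h => ?_, fun h => infix_append_iff.mpr (h.imp_right fun h => .inl (infix_cons h))⟩
  rcases infix_append_iff.mp h with h | h | ⟨l₁, l₂, rfl, h₁, h₂⟩
  · exact .inl h
  · rcases infix_cons_iff.mp h with h | h
    · exact .inl (eq_nil_of_prefix_cons_of_notMem h hb ▸ nil_infix)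
    · exact .inr h
  · obtain rfl := eq_nil_of_prefix_cons_of_notMem h₂ fun h => hb (mem_append_right l₁ h)
    simpa using .inl h₁.isInfix

theorem append_singleton_infix_append_singleton_iff {l w : List α} {a : α} :
    l ++ [a] <:+: w ++ [a] ↔ l ++ [a] <:+: w ∨ l <:+ w := by
  rw [infix_concat_iff, suffix_concat_iff]
  simp [or_comm]

end List

open List

theorem hasZeroRun_append_true_cons {k : ℕ} {u v : List Bool} :
    hasZeroRun k (u ++ true :: v) ↔ hasZeroRun k u ∨ hasZeroRun k v :=
  infix_append_cons_iff_of_notMem (by simp)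

theorem hasZeroRun_append_true {k : ℕ} {w : List Bool} :
    hasZeroRun k (w ++ [true]) ↔ hasZeroRun k w := by
  refine hasZeroRun_append_true_cons.trans (or_iff_left_of_imp fun h => ?_)
  rw [hasZeroRun, eq_nil_of_infix_nil h]
  exact nil_infix

theorem hasZeroRun_succ_append_false {k : ℕ} {w : List Bool} :
    hasZeroRun (k + 1) (w ++ [false]) ↔ hasZeroRun (k + 1) w ∨ replicate k false <:+ w := by
  simp only [hasZeroRun, replicate_succ', append_singleton_infix_append_singleton_iff]

theorem not_hasZeroRun_replicate {k : ℕ} : ¬ hasZeroRun (k + 1) (replicate k false) :=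
  fun h => by simpa using h.length_le

theorem length_allWords (n : ℕ) : (allWords n).length = 2 ^ n := by
  induction n with
  | zero => rfl
  | succ n ih => simp [allWords, ih, pow_succ]

theorem countP_allWords_succ (p : List Bool → Bool) (n : ℕ) :
    (allWords (n + 1)).countP p =
      (allWords n).countP (fun w => p (w ++ [false])) +
        (allWords n).countP (fun w => p (w ++ [true])) := by
  rw [allWords]
  induction allWords n with
  | nil => rfl
  | cons w l ih => simp only [flatMap_cons, countP_append, countP_cons, countP_nil, ih]; omega

theorem countP_append_le_countP_allWords (p : List Bool → Bool) (s : List Bool) (n : ℕ) :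
    (allWords n).countP (fun w => p (w ++ s)) ≤ (allWords (n + s.length)).countP p := by
  induction s generalizing n with
  | nil => simp
  | cons b s ih =>
    calc (allWords n).countP (fun w => p (w ++ b :: s))
        ≤ (allWords (n + 1)).countP (fun w => p (w ++ s)) := by
          rw [countP_allWords_succ]
          cases b <;> simp
      _ ≤ (allWords (n + (b :: s).length)).countP p := by
          simpa [Nat.add_right_comm, Nat.add_assoc] using ih (n + 1)

theorem alpha_eq_countP (k n : ℕ) :
    alpha k n = (allWords n).countP (fun w => !decide (hasZeroRun k w)) :=
  countP_eq_length_filter.symm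

theorem alpha_le_two_pow (k n : ℕ) : alpha k n ≤ 2 ^ n :=
  (length_filter_le _ _).trans (length_allWords n).le

/-- The number of words counted by `alpha (k + 1) n` that cannot be extended by a `0`. -/
def alphaEndZeros (k n : ℕ) : ℕ :=
  (allWords n).countP fun w => !decide (hasZeroRun (k + 1) w) && decide (replicate k false <:+ w)

theorem alpha_succ_add_alphaEndZeros (k n : ℕ) :
    alpha (k + 1) (n + 1) + alphaEndZeros k n = 2 * alpha (k + 1) n := by
  have split := countP_eq_countP_filter_add (allWords n) (fun w => !decide (hasZeroRun (k + 1) w))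
    (fun w => decide (replicate k false <:+ w))
  simp only [countP_filter] at split
  rw [alpha_eq_countP, alpha_eq_countP, countP_allWords_succ, alphaEndZeros]
  simp only [hasZeroRun_succ_append_false, hasZeroRun_append_true, Bool.decide_or, Bool.not_or]
  omega

theorem alpha_le_alphaEndZeros (k m : ℕ) : alpha (k + 1) m ≤ alphaEndZeros k (m + (k + 1)) := by
  have extend := countP_append_le_countP_allWords
    (fun w => !decide (hasZeroRun (k + 1) w) && decide (replicate k false <:+ w))
    (true :: replicate k false) m
  rw [length_cons, length_replicate] at extend
  refine le_trans (le_of_eq ?_) extend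
  rw [alpha_eq_countP]
  refine countP_congr fun u _ => ?_
  have ends : replicate k false <:+ u ++ true :: replicate k false :=
    (suffix_cons _ _).trans (suffix_append _ _)
  simp [hasZeroRun_append_true_cons, not_hasZeroRun_replicate, ends]

theorem alpha_succ_le {k : ℕ} (hk : 0 < k) (n : ℕ) : alpha k (n + 1) ≤ 2 * alpha k n := by
  obtain ⟨k, rfl⟩ := Nat.exists_eq_add_one.mpr hk
  have := alpha_succ_add_alphaEndZeros k n
  omega

theorem alpha_add_le {k : ℕ} (hk : 0 < k) (m i : ℕ) : alpha k (m + i) ≤ 2 ^ i * alpha k m := by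
  induction i with
  | zero => simp
  | succ i ih =>
    calc alpha k (m + i + 1) ≤ 2 * alpha k (m + i) := alpha_succ_le hk _
      _ ≤ 2 * (2 ^ i * alpha k m) := Nat.mul_le_mul_left 2 ih
      _ = 2 ^ (i + 1) * alpha k m := by ring

theorem two_pow_mul_alpha_succ_add_le {k : ℕ} (hk : 0 < k) (m : ℕ) :
    2 ^ k * alpha k (k + m + 1) + alpha k (k + m) ≤ 2 ^ (k + 1) * alpha k (k + m) := by
  obtain ⟨k, rfl⟩ := Nat.exists_eq_add_one.mpr hk
  have recurrence := alpha_succ_add_alphaEndZeros k (k + 1 + m)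
  have lower := alpha_le_alphaEndZeros k m
  rw [add_comm m] at lower
  calc 2 ^ (k + 1) * alpha (k + 1) (k + 1 + m + 1) + alpha (k + 1) (k + 1 + m)
      ≤ 2 ^ (k + 1) * (alpha (k + 1) (k + 1 + m + 1) + alpha (k + 1) m) := by
        rw [mul_add, add_comm (k + 1)]; gcongr; exact alpha_add_le hk m (k + 1)
    _ ≤ 2 ^ (k + 1) * (2 * alpha (k + 1) (k + 1 + m)) := by gcongr; omega
    _ = 2 ^ (k + 1 + 1) * alpha (k + 1) (k + 1 + m) := by ring

theorem alpha_succ_le_mul {k : ℕ} (hk : 0 < k) (m : ℕ) :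
    (alpha k (k + m + 1) : ℝ) ≤ (2 - (2 ^ k)⁻¹) * alpha k (k + m) := by
  have h2k : (0 : ℝ) < 2 ^ k := by positivity
  have step : (2 ^ k * alpha k (k + m + 1) + alpha k (k + m) : ℝ) ≤
      2 ^ (k + 1) * alpha k (k + m) := by exact_mod_cast two_pow_mul_alpha_succ_add_le hk m
  rw [← mul_le_mul_iff_right₀ h2k, ← mul_assoc, mul_sub, mul_inv_cancel₀ h2k.ne']
  rw [pow_succ] at step
  linarith

theorem two_sub_inv_two_pow_le (k : ℕ) : 2 - ((2 : ℝ) ^ k)⁻¹ ≤ 2 * Real.exp (-(2 ^ (k + 1))⁻¹) :=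
  calc 2 - ((2 : ℝ) ^ k)⁻¹ = 2 * (1 - (2 ^ (k + 1))⁻¹) := by rw [pow_succ]; field_simp
    _ ≤ 2 * Real.exp (-(2 ^ (k + 1))⁻¹) := by gcongr; exact Real.one_sub_le_exp_neg _

theorem alpha_le_exp {k : ℕ} (hk : 0 < k) (j : ℕ) :
    (alpha k (k + j) : ℝ) ≤ 2 ^ (k + j) * Real.exp (-(j / 2 ^ (k + 1))) :=
  calc (alpha k (k + j) : ℝ)
      ≤ (2 * Real.exp (-(2 ^ (k + 1))⁻¹)) ^ j * alpha k (k + 0) :=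
        le_geom (u := fun i => (alpha k (k + i) : ℝ)) (by positivity) j fun i _ =>
          (alpha_succ_le_mul hk i).trans (by gcongr; exact two_sub_inv_two_pow_le k)
    _ ≤ (2 * Real.exp (-(2 ^ (k + 1))⁻¹)) ^ j * 2 ^ k := by
        gcongr; exact_mod_cast alpha_le_two_pow k k
    _ = 2 ^ (k + j) * Real.exp (-(j / 2 ^ (k + 1))) := by
        rw [mul_pow, ← Real.exp_nat_mul, pow_add]; ring_nf

/-- For `2 ≤ k ≤ n − 1`, `α_k(n) ≤ 2^n · e^{−(n−k+1)/(12·2^k)}`. -/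
theorem alpha_upper (k n : ℕ) (hk : 2 ≤ k) (hkn : k + 1 ≤ n) :
    (alpha k n : ℝ) ≤ 2 ^ n * Real.exp (-(((n : ℝ) - k + 1) / (12 * 2 ^ k))) := by
  obtain ⟨j, rfl⟩ : ∃ j, n = k + j := ⟨n - k, by omega⟩
  refine (alpha_le_exp (by omega) j).trans ?_
  gcongr 2 ^ _ * Real.exp ?_
  have hj : (1 : ℝ) ≤ j := by exact_mod_cast (by omega : 1 ≤ j)
  rw [neg_le_neg_iff, div_le_div_iff₀ (by positivity) (by positivity), pow_succ]
  push_cast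
  nlinarith [pow_pos (two_pos : (0 : ℝ) < 2) k]
end
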